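/- Let y ∈ ℝ^p be a nonnegative vector, let d₁,…,d_p be positive numbers with d₁y₁ ≥ d₂y₂ ≥ … ≥ d_p y_p, let D = diag(d₁,…,d_p), let λ₁ ≥ … ≥ λ_p ≥ 0, and let b* be the unique minimizer of f(b) = ½‖y − Db‖₂² + J_λ(b) over ℝ^p. If b* has exactly r nonzero entries with r > 0, then the support of b* is exactly the set {1,…,r}, i.e. (b*)_i ≠ 0 if and only if i ≤ r. -/

import Mathlib

/-!
The support of a minimizer `b` is a lower set of indices; a lower set of `Fin p` with `r`
elements is `{i | i < r}`. Suppose `b i = 0` but `b j ≠ 0` with `i ≤ j`. Raising `b i` to a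
small `ε > 0` and placing it in the first zero slot `k` of the sorted order costs at most
`λ_k ε` in `J_λ` (rearrangement inequality), so optimality gives `d_i y_i ≤ λ_k`. Shrinking `|b j|`
by `ε` inside the last slot `m` carrying the value `|b j|` saves at least `λ_m ε`, which gives
`λ_m ≤ d_j y_j - d_j² |b j| < d_j y_j`. Since `m < k`,
`λ_k ≤ λ_m < d_j y_j ≤ d_i y_i ≤ λ_k`, a contradiction.
-/

/-- The nonincreasing rearrangement of the absolute values of the coordinates of `b`. -/
noncomputable def sortedAbs {p : ℕ} (b : Fin p → ℝ) : Fin p → ℝ :=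
  fun i => |b (Tuple.sort (fun j => |b j|) (Fin.rev i))|

/-- The sorted ℓ₁ norm `J_λ(b) = Σ_i λ_i |b|_{(i)}`. -/
noncomputable def Jlam {p : ℕ} (lam b : Fin p → ℝ) : ℝ :=
  ∑ i, lam i * sortedAbs b i

/-- The SLOPE objective with diagonal design matrix `D = diag(d₁,…,d_p)`:
`f(b) = ½ ‖y − D b‖₂² + J_λ(b)`. -/
noncomputable def slopeObj {p : ℕ} (d y lam : Fin p → ℝ) (b : Fin p → ℝ) : ℝ :=
  (1 / 2) * ∑ i, (y i - d i * b i) ^ 2 + Jlam lam b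

open Filter Topology Function

lemma nonneg_of_eventually_nonneg_mul_add_mul_sq {a c : ℝ}
    (h : ∀ᶠ ε in 𝓝[>] (0 : ℝ), 0 ≤ a * ε + c * ε ^ 2) : 0 ≤ a := by
  have hlin : ∀ᶠ ε in 𝓝[>] (0 : ℝ), 0 ≤ a + c * ε := by
    filter_upwards [h, self_mem_nhdsWithin] with ε hε hpos
    refine (mul_nonneg_iff_of_pos_left (c := ε) hpos).mp ?_
    linarith
  have hlim : Tendsto (fun ε => a + c * ε) (𝓝[>] (0 : ℝ)) (𝓝 a) := by
    refine ((continuous_const.add (continuous_const.mul continuous_id)).tendsto' 0 a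
      (by simp)).mono_left nhdsWithin_le_nhds
  exact ge_of_tendsto hlim hlin

lemma eventually_forall_le_of_pos {ι : Type*} [Finite ι] {P : ι → Prop} {c : ι → ℝ}
    (hc : ∀ l, P l → 0 < c l) : ∀ᶠ ε in 𝓝[>] (0 : ℝ), ∀ l, P l → ε ≤ c l := by
  refine eventually_all.mpr fun l => ?_
  by_cases hl : P l
  · filter_upwards [(eventually_lt_nhds (hc l hl)).filter_mono nhdsWithin_le_nhds]
      with ε hε using fun _ => hε.le
  · exact Eventually.of_forall fun _ h => absurd h hl

lemma antitone_update {α β : Type*} [LinearOrder α] [DecidableEq α] [Preorder β]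
    {u : α → β} (hu : Antitone u) {k : α} {x : β}
    (hlt : ∀ l, l < k → x ≤ u l) (hgt : ∀ l, k < l → u l ≤ x) : Antitone (update u k x) := by
  intro l l' hll'
  rcases eq_or_ne l k with rfl | hl <;> rcases eq_or_ne l' l with rfl | hl'
  · exact le_rfl
  · simpa [update_of_ne hl'] using hgt l' (lt_of_le_of_ne hll' hl'.symm)
  · exact le_rfl
  · rcases eq_or_ne l' k with rfl | hl'k
    · simpa [update_of_ne hl] using hlt l (lt_of_le_of_ne hll' hl)
    · simpa [update_of_ne hl, update_of_ne hl'k] using hu hll'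

lemma sum_apply_update {ι : Type*} [Fintype ι] [DecidableEq ι] (F : ι → ℝ → ℝ)
    (u : ι → ℝ) (a : ι) (x : ℝ) :
    ∑ k, F k (update u a x k) = ∑ k, F k (u k) + (F a x - F a (u a)) := by
  simp_rw [apply_update F]
  rw [Finset.sum_update_of_mem (Finset.mem_univ a), Finset.sdiff_singleton_eq_erase,
    ← Finset.add_sum_erase _ _ (Finset.mem_univ a)]
  ring

lemma Fin.mem_iff_lt_ncard_of_isLowerSet {p : ℕ} {S : Set (Fin p)} (hS : IsLowerSet S)
    (i : Fin p) : i ∈ S ↔ (i : ℕ) < S.ncard := by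
  constructor
  · intro hi
    have hsub : ((Finset.Iic i : Finset (Fin p)) : Set (Fin p)) ⊆ S := by
      intro j hj
      exact hS (Finset.mem_Iic.mp hj) hi
    have := Set.ncard_le_ncard hsub (Set.toFinite S)
    rw [Set.ncard_coe_finset, Fin.card_Iic] at this
    omega
  · intro hi
    by_contra hni
    have hsub : S ⊆ ((Finset.Iio i : Finset (Fin p)) : Set (Fin p)) := by
      intro j hj
      rw [Finset.coe_Iio, Set.mem_Iio]
      by_contra hji
      exact hni (hS (not_lt.mp hji) hj)
    have := Set.ncard_le_ncard hsub (Set.toFinite _)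
    rw [Set.ncard_coe_finset, Fin.card_Iio] at this
    omega

section SortedAbs

variable {p : ℕ}

lemma sortedAbs_antitone (b : Fin p → ℝ) : Antitone (sortedAbs b) := by
  intro k l hkl
  simpa [sortedAbs] using Tuple.monotone_sort (fun j => |b j|) (Fin.rev_le_rev.mpr hkl)

noncomputable def sortingPerm (b : Fin p → ℝ) : Equiv.Perm (Fin p) :=
  Fin.revPerm.trans (Tuple.sort fun j => |b j|)

lemma abs_apply_sortingPerm (b : Fin p → ℝ) (l : Fin p) :
    |b (sortingPerm b l)| = sortedAbs b l :=
  rfl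

lemma exists_sortedAbs_eq (b : Fin p → ℝ) (i : Fin p) : ∃ k, sortedAbs b k = |b i| :=
  ⟨(sortingPerm b).symm i, by rw [← abs_apply_sortingPerm, Equiv.apply_symm_apply]⟩

lemma exists_perm_apply_eq_of_sortedAbs_eq {b : Fin p → ℝ} {i k : Fin p}
    (hk : sortedAbs b k = |b i|) :
    ∃ σ : Equiv.Perm (Fin p), σ k = i ∧ ∀ l, |b (σ l)| = sortedAbs b l := by
  set τ := sortingPerm b
  have hτi : sortedAbs b (τ.symm i) = sortedAbs b k := by
    rw [← abs_apply_sortingPerm, τ.apply_symm_apply, hk]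
  refine ⟨(Equiv.swap k (τ.symm i)).trans τ, by simp, fun l => ?_⟩
  rw [Equiv.trans_apply, abs_apply_sortingPerm, Equiv.swap_apply_def]
  split_ifs with h₁ h₂
  · rw [h₁, hτi]
  · rw [h₂, hτi]
  · rfl

lemma Jlam_le_of_antitone {lam : Fin p → ℝ} (hlam : Antitone lam) {b v : Fin p → ℝ}
    (hv : Antitone v) (g : Equiv.Perm (Fin p)) (hg : ∀ k, v k = |b (g k)|) :
    Jlam lam b ≤ ∑ k, lam k * v k := by
  calc Jlam lam b = ∑ k, lam k * v (((sortingPerm b).trans g.symm) k) := by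
        simp [Jlam, ← abs_apply_sortingPerm, hg]
    _ ≤ ∑ k, lam k * v k := (hlam.monovary hv).sum_mul_comp_perm_le_sum_mul

end SortedAbs

section Objective

variable {p : ℕ} {d y lam : Fin p → ℝ}

lemma slopeObj_update_le (hlam : Antitone lam) {b : Fin p → ℝ} {i k : Fin p}
    (hk : sortedAbs b k = |b i|) {x : ℝ} (hx : Antitone (update (sortedAbs b) k |x|)) :
    slopeObj d y lam (update b i x) ≤ slopeObj d y lam b
      + ((y i - d i * x) ^ 2 - (y i - d i * b i) ^ 2) / 2 + lam k * (|x| - |b i|) := by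
  obtain ⟨σ, hσk, hσ⟩ := exists_perm_apply_eq_of_sortedAbs_eq hk
  have hJ : Jlam lam (update b i x) ≤ ∑ l, lam l * update (sortedAbs b) k |x| l := by
    refine Jlam_le_of_antitone hlam hx σ fun l => ?_
    rcases eq_or_ne l k with rfl | hl
    · simp [hσk]
    · rw [update_of_ne hl, update_of_ne (hσk ▸ σ.injective.ne hl), hσ]
  have hquad := sum_apply_update (fun l z => (y l - d l * z) ^ 2) b i x
  have hlin := sum_apply_update (fun l z => lam l * z) (sortedAbs b) k |x|
  simp only [slopeObj, Jlam] at hJ hquad hlin ⊢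
  rw [hk] at hlin
  linarith

end Objective

section Minimizer

variable {p : ℕ} {d y lam b : Fin p → ℝ}

lemma mul_le_lam_of_apply_eq_zero (hlam : Antitone lam)
    (hmin : ∀ b', slopeObj d y lam b ≤ slopeObj d y lam b') {i k : Fin p} (hi : b i = 0)
    (hk : sortedAbs b k = 0) (hlt : ∀ l, l < k → sortedAbs b l ≠ 0) : d i * y i ≤ lam k := by
  suffices 0 ≤ lam k - d i * y i by linarith
  refine nonneg_of_eventually_nonneg_mul_add_mul_sq (c := d i ^ 2 / 2) ?_
  filter_upwards [self_mem_nhdsWithin, eventually_forall_le_of_pos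
    fun l hl => (abs_nonneg _ : 0 ≤ sortedAbs b l).lt_of_ne' (hlt l hl)] with ε (hε : 0 < ε) hεu
  have hanti : Antitone (update (sortedAbs b) k |ε|) := by
    refine antitone_update (sortedAbs_antitone b) (fun l hl => ?_) fun l hl => ?_
    · rw [abs_of_pos hε]; exact hεu l hl
    · exact (hk ▸ sortedAbs_antitone b hl.le).trans (abs_nonneg ε)
  have := (hmin _).trans (slopeObj_update_le hlam (hk.trans (by rw [hi, abs_zero])) hanti)
  rw [hi, abs_of_pos hε] at this
  linarith

lemma lam_lt_mul_abs_of_apply_ne_zero (hlam : Antitone lam)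
    (hmin : ∀ b', slopeObj d y lam b ≤ slopeObj d y lam b') {j m : Fin p} (hd : 0 < d j)
    (hj : b j ≠ 0) (hm : sortedAbs b m = |b j|) (hgt : ∀ l, m < l → sortedAbs b l ≠ |b j|) :
    lam m < d j * |y j| := by
  set t := b j
  -- the perturbation `b j ↦ s * (|t| - ε)` shrinks `|b j|` by `ε` and keeps its sign
  set s := t / |t|
  have ht : 0 < |t| := abs_pos.mpr hj
  have hst : s * |t| = t := div_mul_cancel₀ t ht.ne'
  have hs : |s| = 1 := by rw [abs_div, abs_abs, div_self ht.ne']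
  have hs2 : s ^ 2 = 1 := by rw [← sq_abs, hs, one_pow]
  have hsy : s * y j ≤ |y j| := by simpa [abs_mul, hs] using le_abs_self (s * y j)
  suffices 0 ≤ d j * (s * y j - d j * |t|) - lam m by nlinarith [mul_pos hd (mul_pos hd ht)]
  refine nonneg_of_eventually_nonneg_mul_add_mul_sq (c := d j ^ 2 / 2) ?_
  filter_upwards [self_mem_nhdsWithin, (eventually_lt_nhds ht).filter_mono nhdsWithin_le_nhds,
    eventually_forall_le_of_pos (P := (m < ·)) (c := fun l => |t| - sortedAbs b l)
      fun l hl => sub_pos.mpr ((hm ▸ sortedAbs_antitone b hl.le).lt_of_ne (hgt l hl))]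
    with ε (hε : 0 < ε) hεt hεu
  have habs : |s * (|t| - ε)| = |t| - ε := by rw [abs_mul, hs, one_mul, abs_of_pos (by linarith)]
  have hanti : Antitone (update (sortedAbs b) m |s * (|t| - ε)|) := by
    refine antitone_update (sortedAbs_antitone b) (fun l hl => ?_) fun l hl => ?_
    · rw [habs]; linarith [hm ▸ sortedAbs_antitone b hl.le]
    · rw [habs]; linarith [hεu l hl]
  have := (hmin _).trans (slopeObj_update_le hlam hm hanti)
  rw [habs] at this
  have hincr : ((y j - d j * (s * (|t| - ε))) ^ 2 - (y j - d j * t) ^ 2) / 2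
      + lam m * (|t| - ε - |t|)
      = (d j * (s * y j - d j * |t|) - lam m) * ε + d j ^ 2 / 2 * ε ^ 2 := by
    linear_combination (-d j * (2 * y j - d j * s * |t| - d j * t) / 2) * hst
      + (d j ^ 2 * ε ^ 2 / 2 - d j ^ 2 * |t| * ε) * hs2
  linarith

lemma isLowerSet_support_of_minimizer (hd : ∀ i, 0 < d i) (hlam : Antitone lam)
    (hy : ∀ i, 0 ≤ y i) (hdy : Antitone fun i => d i * y i)
    (hmin : ∀ b', slopeObj d y lam b ≤ slopeObj d y lam b') : IsLowerSet {i | b i ≠ 0} := by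
  intro j i hij hj hi
  obtain ⟨k, hk⟩ : ∃ k, Minimal (· ∈ {k | sortedAbs b k = 0}) k := by
    obtain ⟨k, hk⟩ := exists_sortedAbs_eq b i
    exact (Set.toFinite _).exists_minimal ⟨k, hk.trans (by simp [hi])⟩
  obtain ⟨m, hm⟩ : ∃ m, Maximal (· ∈ {l | sortedAbs b l = |b j|}) m :=
    (Set.toFinite _).exists_maximal (exists_sortedAbs_eq b j)
  have hzero : d i * y i ≤ lam k :=
    mul_le_lam_of_apply_eq_zero hlam hmin hi hk.1
      fun l hl hl0 => (hk.2 hl0 hl.le).not_gt hl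
  have hnonzero : lam m < d j * |y j| :=
    lam_lt_mul_abs_of_apply_ne_zero hlam hmin (hd j) hj hm.1
      fun l hl hlm => (hm.2 hlm hl.le).not_gt hl
  have hmk : m ≤ k := by
    by_contra! hkm
    have := sortedAbs_antitone b hkm.le
    rw [hk.1, hm.1] at this
    exact (abs_pos.mpr hj).not_ge this
  rw [abs_of_nonneg (hy j)] at hnonzero
  linarith [hlam hmk, (hdy hij : d j * y j ≤ d i * y i)]

end Minimizer

theorem slope_support_initial_segment_general {p : ℕ} (d y lam : Fin p → ℝ)
    (hd : ∀ i, 0 < d i)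
    (hlam_anti : ∀ i j : Fin p, i ≤ j → lam j ≤ lam i)
    (hy : ∀ i, 0 ≤ y i)
    (hord : ∀ i j : Fin p, i ≤ j → d j * y j ≤ d i * y i)
    (bstar : Fin p → ℝ)
    (hbstar : ∀ b, slopeObj d y lam bstar ≤ slopeObj d y lam b)
    (r : ℕ)
    (hcard : {i : Fin p | bstar i ≠ 0}.ncard = r) :
    ∀ i : Fin p, bstar i ≠ 0 ↔ (i : ℕ) < r := by
  rw [← hcard]
  exact Fin.mem_iff_lt_ncard_of_isLowerSet
    (isLowerSet_support_of_minimizer hd hlam_anti hy hord hbstar)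

/-- If `y ⪰ 0`, `d₁y₁ ≥ … ≥ d_p y_p`, and the minimizer `b*` of the diagonal SLOPE objective
has exactly `r > 0` nonzero entries, then the support of `b*` is exactly `{1,…,r}`
(0-indexed: the indices `i` with `i < r`). -/
theorem slope_support_initial_segment {p : ℕ} (d y lam : Fin p → ℝ)
    (hd : ∀ i, 0 < d i)
    (hlam_anti : ∀ i j : Fin p, i ≤ j → lam j ≤ lam i)
    (hlam_nonneg : ∀ i, 0 ≤ lam i)
    (hy : ∀ i, 0 ≤ y i)
    (hord : ∀ i j : Fin p, i ≤ j → d j * y j ≤ d i * y i)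
    (bstar : Fin p → ℝ)
    (hbstar : ∀ b, slopeObj d y lam bstar ≤ slopeObj d y lam b)
    (r : ℕ) (hr : 0 < r)
    (hcard : {i : Fin p | bstar i ≠ 0}.ncard = r) :
    ∀ i : Fin p, bstar i ≠ 0 ↔ (i : ℕ) < r :=
  slope_support_initial_segment_general d y lam hd hlam_anti hy hord bstar hbstar r hcard
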